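/- Let b, c be nonnegative integers with c ≤ b. Then Δ'(x;b,c), regarded as an element of the polynomial ring ℚ[x] (the determinant of the matrix M'(x;b,c) with polynomial entries), has degree at most c(b-c). -/

import Mathlib

open Finset Polynomial

/-- Generalized binomial coefficient `C(p,k)` as a polynomial in the "variable" `p`. -/
noncomputable def gbinomP (p : Polynomial ℚ) (k : ℤ) : Polynomial ℚ :=
  if 0 ≤ k then
    Polynomial.C ((k.toNat.factorial : ℚ)⁻¹) * ∏ m ∈ Finset.range k.toNat, (p - Polynomial.C (m : ℚ))
  else 0

/-- Shifted factorial `(p)_k` of a polynomial, nonnegative index. -/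
noncomputable def pochP (p : Polynomial ℚ) (k : ℕ) : Polynomial ℚ :=
  ∏ m ∈ Finset.range k, (p + Polynomial.C (m : ℚ))

/-- The matrix `M'(x;b,c)` with polynomial entries; column index `j` of the paper is `c + j'`. -/
noncomputable def M'pmat (b c : ℕ) : Matrix (Fin b) (Fin b) (Polynomial ℚ) := fun i j =>
  if c + (j : ℕ) < b then
    gbinomP (Polynomial.X + Polynomial.C (c : ℚ))
      (((i : ℕ) : ℤ) - ((c : ℤ) + (j : ℕ)) + (c : ℤ))
  else if (i : ℕ) < c then
    2 * gbinomP (2 * Polynomial.X + Polynomial.C (b : ℚ))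
      (((i : ℕ) : ℤ) - ((c : ℤ) + (j : ℕ)) + (b : ℤ))
  else
    gbinomP (2 * Polynomial.X + Polynomial.C (b : ℚ))
      (((i : ℕ) : ℤ) - ((c : ℤ) + (j : ℕ)) + (b : ℤ))

/-- `Δ'(x;b,c)` as a polynomial in `x`. -/
noncomputable def Δ'poly (b c : ℕ) : Polynomial ℚ := (M'pmat b c).det

/-!
Entry `(i, j)` of `M'` is a binomial coefficient of index `i - j + s_j` in a linear polynomial,
where `s_j = 0` on the first `b - c` columns and `s_j = b - c` on the last `c`; so it vanishes or
has degree at most `i - j + s_j`. Every term of the Leibniz expansion of the determinant then has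
degree at most `∑ⱼ (σ j - j + s_j) = ∑ⱼ s_j = c(b - c)`.
-/

theorem Matrix.natDegree_det_le_of_natDegree_entry_le {R n : Type*} [CommRing R] [Fintype n]
    [DecidableEq n] (A : Matrix n n R[X]) (u v : n → ℤ)
    (hA : ∀ i j, A i j ≠ 0 → ((A i j).natDegree : ℤ) ≤ u i + v j) :
    A.det.natDegree ≤ (∑ i, u i + ∑ j, v j).toNat := by
  rw [Matrix.det_apply']
  refine natDegree_sum_le_of_forall_le _ _ fun σ _ => ?_
  refine (natDegree_mul_le_of_le (natDegree_intCast _).le le_rfl).trans ?_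
  rw [zero_add]
  by_cases hzero : ∃ j, A (σ j) j = 0
  · obtain ⟨j, hj⟩ := hzero
    rw [prod_eq_zero (f := fun i => A (σ i) i) (mem_univ j) hj, natDegree_zero]
    exact Nat.zero_le _
  push Not at hzero
  have hterm : ((∏ j, A (σ j) j).natDegree : ℤ) ≤ ∑ i, u i + ∑ j, v j :=
    calc ((∏ j, A (σ j) j).natDegree : ℤ)
        ≤ ∑ j, ((A (σ j) j).natDegree : ℤ) := mod_cast natDegree_prod_le _ _
      _ ≤ ∑ j, (u (σ j) + v j) := sum_le_sum fun j _ => hA _ _ (hzero j)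
      _ = ∑ i, u i + ∑ j, v j := by rw [sum_add_distrib, Equiv.sum_comp σ u]
  omega

theorem natDegree_gbinomP_le {p : ℚ[X]} (hp : p.natDegree ≤ 1) {k : ℤ} (hk : gbinomP p k ≠ 0) :
    ((gbinomP p k).natDegree : ℤ) ≤ k := by
  unfold gbinomP at hk ⊢
  split_ifs at hk ⊢ with h0
  · have hprod : (∏ m ∈ range k.toNat, (p - C (m : ℚ))).natDegree ≤ k.toNat :=
      calc _ ≤ ∑ m ∈ range k.toNat, (p - C (m : ℚ)).natDegree := natDegree_prod_le _ _
        _ ≤ ∑ _m ∈ range k.toNat, 1 := sum_le_sum fun m _ => natDegree_sub_C.trans_le hp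
        _ = k.toNat := by simp
    have := (natDegree_C_mul_le ((k.toNat.factorial : ℚ)⁻¹) _).trans hprod
    omega
  · exact absurd rfl hk

def M'colShift (b c : ℕ) (j : ℕ) : ℤ := if c + j < b then 0 else (b : ℤ) - c

theorem sum_M'colShift {b c : ℕ} (hcb : c ≤ b) :
    ∑ j : Fin b, M'colShift b c j = c * ((b : ℤ) - c) := by
  rw [Fin.sum_univ_eq_sum_range (M'colShift b c)]
  simp only [M'colShift, sum_ite, sum_const_zero, sum_const, zero_add, nsmul_eq_mul]
  have hfilter : (range b).filter (fun j => ¬ c + j < b) = Ico (b - c) b := by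
    ext j
    simp only [mem_filter, mem_range, mem_Ico, not_lt]
    omega
  rw [hfilter, Nat.card_Ico, Nat.sub_sub_self hcb]

theorem natDegree_M'pmat_le (b c : ℕ) (i j : Fin b) (hne : M'pmat b c i j ≠ 0) :
    ((M'pmat b c i j).natDegree : ℤ) ≤ (i : ℤ) + (M'colShift b c j - j) := by
  have hdeg₁ : (X + C (c : ℚ)).natDegree ≤ 1 := by
    rw [natDegree_X_add_C]
  have hdeg₂ : (2 * X + C (b : ℚ)).natDegree ≤ 1 := by
    refine (natDegree_add_le _ _).trans (max_le ?_ (by simp))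
    exact natDegree_mul_le.trans (by simp)
  have natDegree_two_mul_le (q : ℚ[X]) : (2 * q).natDegree ≤ q.natDegree :=
    natDegree_mul_le.trans (by simp)
  unfold M'pmat at hne ⊢
  unfold M'colShift
  split_ifs at hne ⊢
  · have := natDegree_gbinomP_le hdeg₁ hne
    omega
  · have := natDegree_gbinomP_le hdeg₂ (right_ne_zero_of_mul hne)
    refine (Nat.cast_le.2 (natDegree_two_mul_le _)).trans ?_
    omega
  · have := natDegree_gbinomP_le hdeg₂ hne
    omega

/-- `Δ'(x;b,c)`, as a polynomial in `x`, has degree at most `c(b-c)`. -/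
theorem delta'_degree_le (b c : ℕ) (hcb : c ≤ b) :
    (Δ'poly b c).natDegree ≤ c * (b - c) := by
  have h := (M'pmat b c).natDegree_det_le_of_natDegree_entry_le (fun i => (i : ℤ))
    (fun j => M'colShift b c j - j) (natDegree_M'pmat_le b c)
  have hsum : ∑ i : Fin b, (i : ℤ) + ∑ j : Fin b, (M'colShift b c j - (j : ℤ))
      = c * ((b : ℤ) - c) := by
    rw [sum_sub_distrib, sum_M'colShift hcb]
    ring
  rw [hsum] at h
  unfold Δ'poly
  have : ((c * (b - c) : ℕ) : ℤ) = c * ((b : ℤ) - c) := by push_cast [Nat.cast_sub hcb]; rfl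
  omega
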